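/- Ill-posedness of the free-horizon problem without a stage-cost lower bound: consider the linear system on ℝ² with A = [[1, α],[0, 1]], B = (0, β)^⊤ where α ≠ 0 and β ≠ 0, stage cost ℓ(x,u) = ½u² and terminal cost Φ(x) = ‖x‖². Then for every initial state x_0 ∈ ℝ², the infimum over all horizons T ∈ ℕ and control sequences u ∈ ℝ^T of J(x_0, u, T) = Σ_{k=0}^{T−1} ½u_k² + ‖x_T‖² equals 0; moreover, if x_0 ≠ 0 this infimum is not attained, i.e. J(x_0, u, T) > 0 for every T and u. -/

import Mathlib

/-!
With no state cost along the way, control effort can be spread over arbitrarily long horizons.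
Braking the velocity `v` by the constant control `-v / (β N)` for `N` steps costs
`v² / (2 β² N)`; from rest, a pair of opposite impulses `±d` separated by `K` coasting steps
moves the position by `α β d (K + 1)` and returns it to rest at cost `d²`, so any position is
reached at cost `O(1 / K²)`. Conversely, zero cost forces zero controls and `x_T = 0`, while the
uncontrolled trajectory `(p + α T v, v)` vanishes only from `x₀ = 0`.
-/

open Matrix

/-- Trajectory of the planar system `x_{k+1} = [[1, α],[0, 1]] x_k + (0, β)ᵀ u_k`
with scalar control. -/
noncomputable def traj2 (α β : ℝ) (x₀ : Fin 2 → ℝ) (u : ℕ → ℝ) : ℕ → (Fin 2 → ℝ)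
  | 0 => x₀
  | k + 1 => !![1, α; 0, 1] *ᵥ traj2 α β x₀ u k + u k • ![0, β]

/-- The objective `J(x₀, u, T) = Σ_{k<T} ½u_k² + ‖x_T‖²` (Euclidean norm squared). -/
noncomputable def J2 (α β : ℝ) (x₀ : Fin 2 → ℝ) (u : ℕ → ℝ) (T : ℕ) : ℝ :=
  (∑ k ∈ Finset.range T, (1 / 2) * (u k) ^ 2) +
    ((traj2 α β x₀ u T 0) ^ 2 + (traj2 α β x₀ u T 1) ^ 2)

open Filter Topology Finset

section
variable {α β : ℝ}

@[simp]
lemma traj2_zero (x₀ : Fin 2 → ℝ) (u : ℕ → ℝ) : traj2 α β x₀ u 0 = x₀ := rfl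

@[simp]
lemma traj2_succ_apply_zero (x₀ : Fin 2 → ℝ) (u : ℕ → ℝ) (k : ℕ) :
    traj2 α β x₀ u (k + 1) 0 = traj2 α β x₀ u k 0 + α * traj2 α β x₀ u k 1 := by
  simp [traj2, dotProduct, Fin.sum_univ_two]

@[simp]
lemma traj2_succ_apply_one (x₀ : Fin 2 → ℝ) (u : ℕ → ℝ) (k : ℕ) :
    traj2 α β x₀ u (k + 1) 1 = traj2 α β x₀ u k 1 + β * u k := by
  simp [traj2, dotProduct, Fin.sum_univ_two, mul_comm]

lemma traj2_congr {x₀ : Fin 2 → ℝ} {u w : ℕ → ℝ} {T : ℕ} (h : ∀ k < T, u k = w k) :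
    traj2 α β x₀ u T = traj2 α β x₀ w T := by
  induction T with
  | zero => rfl
  | succ T ih =>
    simp only [traj2, ih fun k hk => h k (by omega), h T (by omega)]

lemma traj2_zero_control (x₀ : Fin 2 → ℝ) (T : ℕ) :
    traj2 α β x₀ (fun _ => 0) T 0 = x₀ 0 + α * T * x₀ 1 ∧
      traj2 α β x₀ (fun _ => 0) T 1 = x₀ 1 := by
  induction T with
  | zero => simp
  | succ T ih =>
    simp only [traj2_succ_apply_zero, traj2_succ_apply_one, ih]
    push_cast
    constructor <;> ring

lemma traj2_const_apply_one (x₀ : Fin 2 → ℝ) (c : ℝ) (T : ℕ) :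
    traj2 α β x₀ (fun _ => c) T 1 = x₀ 1 + β * c * T := by
  induction T with
  | zero => simp
  | succ T ih => rw [traj2_succ_apply_one, ih]; push_cast; ring

lemma J2_nonneg (x₀ : Fin 2 → ℝ) (u : ℕ → ℝ) (T : ℕ) : 0 ≤ J2 α β x₀ u T := by
  unfold J2
  have := sum_nonneg fun k (_ : k ∈ range T) => (by positivity : (0 : ℝ) ≤ 1 / 2 * u k ^ 2)
  positivity

lemma J2_one (x₀ : Fin 2 → ℝ) (u : ℕ → ℝ) :
    J2 α β x₀ u 1 = 1 / 2 * u 0 ^ 2 + ((x₀ 0 + α * x₀ 1) ^ 2 + (x₀ 1 + β * u 0) ^ 2) := by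
  simp [J2]

def ctrlAppend (N : ℕ) (u w : ℕ → ℝ) : ℕ → ℝ := fun k => if k < N then u k else w (k - N)

lemma traj2_ctrlAppend (x₀ : Fin 2 → ℝ) (N : ℕ) (u w : ℕ → ℝ) (n : ℕ) :
    traj2 α β x₀ (ctrlAppend N u w) (N + n) = traj2 α β (traj2 α β x₀ u N) w n := by
  induction n with
  | zero => exact traj2_congr fun k hk => if_pos hk
  | succ n ih =>
    have hw : ctrlAppend N u w (N + n) = w n := by simp [ctrlAppend]
    rw [← add_assoc, traj2.eq_2, traj2.eq_2, ih, hw]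

lemma J2_ctrlAppend (x₀ : Fin 2 → ℝ) (N : ℕ) (u w : ℕ → ℝ) (n : ℕ) :
    J2 α β x₀ (ctrlAppend N u w) (N + n) =
      (∑ k ∈ range N, 1 / 2 * u k ^ 2) + J2 α β (traj2 α β x₀ u N) w n := by
  have hu : ∀ k ∈ range N, 1 / 2 * ctrlAppend N u w k ^ 2 = 1 / 2 * u k ^ 2 := fun k hk => by
    rw [ctrlAppend, if_pos (mem_range.mp hk)]
  have hw : ∀ k, ctrlAppend N u w (N + k) = w k := fun k => by simp [ctrlAppend]
  rw [J2, J2, sum_range_add, sum_congr rfl hu, traj2_ctrlAppend]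
  simp only [hw]
  ring

lemma J2_impulsePair {x : Fin 2 → ℝ} (hx : x 1 = 0) (d : ℝ) (K : ℕ) :
    J2 α β x (ctrlAppend 1 (fun _ => d) (ctrlAppend K (fun _ => 0) (fun _ => -d))) (1 + (K + 1)) =
      d ^ 2 + (x 0 + α * β * d * (K + 1)) ^ 2 := by
  rw [J2_ctrlAppend, J2_ctrlAppend, J2_one]
  obtain ⟨hcoast0, hcoast1⟩ :=
    traj2_zero_control (α := α) (β := β) (traj2 α β x (fun _ => d) 1) K
  simp only [hcoast0, hcoast1, traj2_succ_apply_zero, traj2_succ_apply_one, traj2_zero, hx,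
    sum_range_one, zero_pow two_ne_zero, mul_zero, sum_const_zero]
  ring

lemma exists_J2_lt_of_apply_one_eq_zero (hα : α ≠ 0) (hβ : β ≠ 0) {x : Fin 2 → ℝ}
    (hx : x 1 = 0) {ε : ℝ} (hε : 0 < ε) : ∃ T u, J2 α β x u T < ε := by
  obtain ⟨K, hK⟩ : ∃ K : ℕ, (x 0 / (α * β) / (K + 1)) ^ 2 < ε := by
    have hd := ((tendsto_one_div_add_atTop_nhds_zero_nat (𝕜 := ℝ)).const_mul
      (x 0 / (α * β))).pow 2
    rw [mul_zero, zero_pow two_ne_zero] at hd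
    simpa only [mul_one_div] using (hd.eventually (gt_mem_nhds hε)).exists
  have hreach : x 0 + α * β * -(x 0 / (α * β) / (K + 1)) * (K + 1) = 0 := by
    field_simp
    ring
  refine ⟨_, _, (J2_impulsePair hx (-(x 0 / (α * β) / (K + 1))) K).trans_lt ?_⟩
  rwa [hreach, zero_pow two_ne_zero, add_zero, neg_sq]

lemma exists_J2_lt (hα : α ≠ 0) (hβ : β ≠ 0) (x₀ : Fin 2 → ℝ) {ε : ℝ} (hε : 0 < ε) :
    ∃ T u, J2 α β x₀ u T < ε := by
  obtain ⟨N, hN, hcost⟩ := ((eventually_gt_atTop 0).and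
    ((tendsto_const_div_atTop_nhds_zero_nat ((x₀ 1 / β) ^ 2 / 2)).eventually
      (gt_mem_nhds (half_pos hε)))).exists
  obtain ⟨c, hc⟩ : ∃ c, c = -(x₀ 1 / (β * N)) := ⟨_, rfl⟩
  have hN' : (N : ℝ) ≠ 0 := Nat.cast_ne_zero.mpr hN.ne'
  have hbrake : traj2 α β x₀ (fun _ => c) N 1 = 0 := by
    rw [traj2_const_apply_one, hc]
    field_simp
    ring
  obtain ⟨T, w, hw⟩ := exists_J2_lt_of_apply_one_eq_zero hα hβ hbrake (half_pos hε)
  refine ⟨N + T, ctrlAppend N (fun _ => c) w, ?_⟩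
  have hrun : ∑ k ∈ range N, 1 / 2 * c ^ 2 = (x₀ 1 / β) ^ 2 / 2 / N := by
    rw [sum_const, card_range, nsmul_eq_mul, hc]
    field_simp
  rw [J2_ctrlAppend, hrun]
  linarith

lemma J2_pos {x₀ : Fin 2 → ℝ} (hx₀ : x₀ ≠ 0) (u : ℕ → ℝ) (T : ℕ) : 0 < J2 α β x₀ u T := by
  refine (J2_nonneg x₀ u T).lt_of_ne fun h => hx₀ ?_
  have hterms : ∀ k ∈ range T, 0 ≤ 1 / 2 * u k ^ 2 := fun k _ => by positivity
  have hrun := sum_nonneg hterms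
  rw [J2] at h
  have hu : ∀ k < T, u k = 0 := fun k hk => by
    have := (sum_eq_zero_iff_of_nonneg hterms).mp (by nlinarith) k (mem_range.mpr hk)
    simpa using this
  obtain ⟨h0, h1⟩ := traj2_zero_control (α := α) (β := β) x₀ T
  rw [traj2_congr hu, h0, h1] at h
  have hx1 : x₀ 1 = 0 := by nlinarith
  rw [hx1] at h
  have hx0 : x₀ 0 = 0 := by nlinarith
  ext i
  fin_cases i <;> assumption

end

/-- Ill-posedness of the free-horizon problem without a stage-cost lower bound:
for `α ≠ 0`, `β ≠ 0`, the infimum of `J(x₀, u, T)` over all horizons `T` and control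
sequences `u` is `0`, and when `x₀ ≠ 0` it is not attained: `J(x₀, u, T) > 0` for all
`T` and `u`. -/
theorem free_horizon_ill_posed (α β : ℝ) (hα : α ≠ 0) (hβ : β ≠ 0) (x₀ : Fin 2 → ℝ) :
    sInf {v : ℝ | ∃ (T : ℕ) (u : ℕ → ℝ), v = J2 α β x₀ u T} = 0 ∧
      (x₀ ≠ 0 → ∀ (T : ℕ) (u : ℕ → ℝ), 0 < J2 α β x₀ u T) := by
  refine ⟨le_antisymm ?_ ?_, fun hx₀ T u => J2_pos hx₀ u T⟩
  · have hbdd : BddBelow {v : ℝ | ∃ (T : ℕ) (u : ℕ → ℝ), v = J2 α β x₀ u T} :=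
      ⟨0, by rintro v ⟨T, u, rfl⟩; exact J2_nonneg x₀ u T⟩
    refine le_of_forall_pos_lt_add fun ε hε => ?_
    obtain ⟨T, u, hu⟩ := exists_J2_lt hα hβ x₀ hε
    exact csInf_lt_of_lt hbdd ⟨T, u, rfl⟩ (by simpa using hu)
  · exact le_csInf ⟨_, 0, 0, rfl⟩ (by rintro v ⟨T, u, rfl⟩; exact J2_nonneg x₀ u T)
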